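/- Consider a two-layer bias-free bilinear network whose scalar output in direction u ∈ ℝ^n is f(x) = u^T((W₂y) ⊙ (V₂y)) with y = (W₁x) ⊙ (V₁x), for W₁, V₁ ∈ ℝ^{m×d} and W₂, V₂ ∈ ℝ^{n×m}. Then there exist real numbers λ_1, …, λ_m, an orthonormal basis v_1, …, v_m of ℝ^m, and for each i real numbers μ_{i,1}, …, μ_{i,d} and an orthonormal basis w_{i,1}, …, w_{i,d} of ℝ^d, such that for every x ∈ ℝ^d: f(x) = Σ_{i=1}^{m} λ_i ( Σ_{j=1}^{d} μ_{i,j} (w_{i,j}^T x)^2 )^2. -/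

import Mathlib

/-!
Projecting a bias-free bilinear layer `y ↦ (W y) ⊙ (V y)` onto a direction `c` gives the
quadratic form of `Wᵀ diag(c) V`; after symmetrization, the spectral theorem writes it as
`∑ᵢ λᵢ (vᵢ ⬝ y)²` for an orthonormal eigenbasis `vᵢ`. For the output layer and direction `u`
this yields `λᵢ, vᵢ`; each `vᵢ ⬝ y`, with `y` the first layer's output, is again such a
projection, now of the first layer onto `vᵢ`, and diagonalizing it yields `μᵢⱼ, wᵢⱼ`.
-/

open Matrix

namespace Matrix

variable {ι κ R : Type*} [Fintype ι] [Fintype κ]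

theorem dotProduct_mulVec_mul_mulVec [DecidableEq κ] [CommSemiring R] (W V : Matrix κ ι R)
    (c : κ → R) (y : ι → R) :
    c ⬝ᵥ (W *ᵥ y * V *ᵥ y) = y ⬝ᵥ (Wᵀ * diagonal c * V) *ᵥ y := by
  rw [← mulVec_mulVec, ← mulVec_mulVec, dotProduct_mulVec, vecMul_transpose]
  simp only [dotProduct, mulVec_diagonal, Pi.mul_apply]
  exact Finset.sum_congr rfl fun a _ => by ring

theorem dotProduct_mulVec_self_add_transpose [CommSemiring R] (M : Matrix ι ι R) (x : ι → R) :
    x ⬝ᵥ (M + Mᵀ) *ᵥ x = 2 * (x ⬝ᵥ M *ᵥ x) := by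
  have hT : x ⬝ᵥ Mᵀ *ᵥ x = x ⬝ᵥ M *ᵥ x := by
    rw [dotProduct_mulVec, vecMul_transpose, dotProduct_comm]
  rw [add_mulVec, dotProduct_add, hT, two_mul]

variable [DecidableEq ι]

theorem IsHermitian.dotProduct_eigenvectorBasis {A : Matrix ι ι ℝ} (hA : A.IsHermitian)
    (i j : ι) :
    ⇑(hA.eigenvectorBasis i) ⬝ᵥ ⇑(hA.eigenvectorBasis j) = if i = j then 1 else 0 := by
  rw [← orthonormal_iff_ite.mp hA.eigenvectorBasis.orthonormal i j,
    EuclideanSpace.inner_eq_star_dotProduct, dotProduct_comm]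
  rfl

theorem IsHermitian.dotProduct_mulVec_self {A : Matrix ι ι ℝ} (hA : A.IsHermitian)
    (x : ι → ℝ) :
    x ⬝ᵥ A *ᵥ x = ∑ i, hA.eigenvalues i * (⇑(hA.eigenvectorBasis i) ⬝ᵥ x) ^ 2 := by
  have hU : (hA.eigenvectorUnitary : Matrix ι ι ℝ)ᵀ *ᵥ x =
      fun i => ⇑(hA.eigenvectorBasis i) ⬝ᵥ x := rfl
  conv_lhs => rw [hA.spectral_theorem, Unitary.conjStarAlgAut_apply, star_eq_conjTranspose,
    conjTranspose_eq_transpose_of_trivial, ← mulVec_mulVec, ← mulVec_mulVec, dotProduct_mulVec,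
    ← mulVec_transpose, hU]
  simp only [dotProduct, mulVec_diagonal, Function.comp_apply, RCLike.ofReal_real_eq_id, id]
  exact Finset.sum_congr rfl fun i _ => by ring

theorem exists_orthonormal_dotProduct_mulVec_self_eq_sum (M : Matrix ι ι ℝ) :
    ∃ (lam : ι → ℝ) (v : ι → ι → ℝ), (∀ i j, v i ⬝ᵥ v j = if i = j then 1 else 0) ∧
      ∀ x, x ⬝ᵥ M *ᵥ x = ∑ i, lam i * (v i ⬝ᵥ x) ^ 2 := by
  have hM : (M + Mᵀ).IsHermitian := by
    simpa [conjTranspose_eq_transpose_of_trivial] using isHermitian_add_transpose_self M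
  refine ⟨fun i => hM.eigenvalues i / 2, fun i => hM.eigenvectorBasis i,
    hM.dotProduct_eigenvectorBasis, fun x => ?_⟩
  have h := hM.dotProduct_mulVec_self x
  rw [dotProduct_mulVec_self_add_transpose] at h
  simp only [div_mul_eq_mul_div, ← Finset.sum_div, ← h]
  ring

end Matrix

/-- Full-model eigendecomposition of a two-layer bias-free bilinear network:
if `f(x) = uᵀ((W₂y) ⊙ (V₂y))` with `y = (W₁x) ⊙ (V₁x)`, then there exist
eigenvalues `λᵢ` with an orthonormal basis `vᵢ` of `ℝ^m`, and for each `i`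
eigenvalues `μᵢⱼ` with an orthonormal basis `wᵢⱼ` of `ℝ^d`, such that
`f(x) = ∑ᵢ λᵢ (∑ⱼ μᵢⱼ (wᵢⱼᵀ x)²)²` for every `x`. -/
theorem two_layer_bilinear_eigendecomposition
    (d m n : ℕ) (W₁ V₁ : Matrix (Fin m) (Fin d) ℝ) (W₂ V₂ : Matrix (Fin n) (Fin m) ℝ)
    (u : Fin n → ℝ) (f : (Fin d → ℝ) → ℝ)
    (hf : ∀ x : Fin d → ℝ,
      f x = u ⬝ᵥ (fun a =>
        (W₂.mulVec (fun b => (W₁.mulVec x b) * (V₁.mulVec x b)) a) *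
        (V₂.mulVec (fun b => (W₁.mulVec x b) * (V₁.mulVec x b)) a))) :
    ∃ (lam : Fin m → ℝ) (v : Fin m → Fin m → ℝ)
      (mu : Fin m → Fin d → ℝ) (w : Fin m → Fin d → Fin d → ℝ),
      (∀ i j, v i ⬝ᵥ v j = if i = j then 1 else 0) ∧
      (∀ i, ∀ j k, w i j ⬝ᵥ w i k = if j = k then 1 else 0) ∧
      ∀ x : Fin d → ℝ,
        f x = ∑ i : Fin m, lam i * (∑ j : Fin d, mu i j * (w i j ⬝ᵥ x) ^ 2) ^ 2 := by
  obtain ⟨lam, v, hv, hout⟩ :=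
    exists_orthonormal_dotProduct_mulVec_self_eq_sum (W₂ᵀ * diagonal u * V₂)
  choose mu w hw hhidden using fun i =>
    exists_orthonormal_dotProduct_mulVec_self_eq_sum (W₁ᵀ * diagonal (v i) * V₁)
  refine ⟨lam, v, mu, w, hv, hw, fun x => ?_⟩
  rw [hf]
  change u ⬝ᵥ (W₂ *ᵥ (W₁ *ᵥ x * V₁ *ᵥ x) * V₂ *ᵥ (W₁ *ᵥ x * V₁ *ᵥ x)) = _
  simp only [dotProduct_mulVec_mul_mulVec, hout, hhidden]
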